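/- arXiv:math/0608662 — 8 statements merged into one kernel-verified Lean document; each statement's English description precedes it below -/
import Mathlib

section
/- The symmetrized bidisc G_2 = {(μ_1+μ_2, μ_1μ_2) : μ_1, μ_2 ∈ D} (where D is the open unit disc in ℂ) intersected with any complex affine line L ⊂ ℂ² is connected whenever nonempty. -/
open Metric

/-- The symmetrized bidisc. -/
def symBidisc : Set (ℂ × ℂ) :=
  {p | ∃ a b : ℂ, a ∈ ball (0 : ℂ) 1 ∧ b ∈ ball (0 : ℂ) 1 ∧ p = (a + b, a * b)}

open Complex Set ComplexConjugate

/-!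
Write the line as `α s + β p = γ`. A point `(z + w, z w)` of `G₂` lies on it iff
`w (α + β z) = γ - α z`. If `α + β z` vanishes at such a point, then `α² + β γ = 0`, the
equation factors as `(β z + α)(β w + α) = 0`, and the intersection is the image of the disc
under `w ↦ (c + w, c w)` with `c = -α / β`. Otherwise `w` is a continuous function of `z`,
and the intersection is the image of `S = {z ∈ 𝔻 | ‖γ - α z‖ < ‖α + β z‖}`. The function
`‖α + β z‖² - ‖γ - α z‖²` has leading part `(‖β‖² - ‖α‖²) ‖z‖²`: if `‖β‖ ≤ ‖α‖` it is
concave and `S` is convex; otherwise `S` is the unit disc minus a closed disc. The latter is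
connected because moving a point along its circle about the origin, towards the ray opposite
to the removed disc's centre, only increases its distance to that centre, and ends on a
segment of that ray.
-/

theorem isPreconnected_of_forall_exists_inter {X : Type*} [TopologicalSpace X] {s K : Set X}
    (hK : IsPreconnected K) (hKs : K ⊆ s)
    (h : ∀ x ∈ s, ∃ t ⊆ s, IsPreconnected t ∧ x ∈ t ∧ (t ∩ K).Nonempty) :
    IsPreconnected s := by
  refine isPreconnected_of_forall_pair fun x hx y hy => ?_
  obtain ⟨tx, htxs, htx, hxtx, hxK⟩ := h x hx
  obtain ⟨ty, htys, hty, hyty, hyK⟩ := h y hy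
  refine ⟨tx ∪ K ∪ ty, union_subset (union_subset htxs hKs) htys, Or.inl (Or.inl hxtx),
    Or.inr hyty, (htx.union' hxK hK).union' ?_ hty⟩
  obtain ⟨w, hwty, hwK⟩ := hyK
  exact ⟨w, Or.inr hwK, hwty⟩

theorem cos_le_cos_of_mem_uIcc_arg {φ θ : ℝ} (hφ : φ ∈ Ioc (-Real.pi) Real.pi)
    (hθ : θ ∈ uIcc φ (if 0 ≤ φ then Real.pi else -Real.pi)) : Real.cos θ ≤ Real.cos φ := by
  rw [← Real.cos_abs θ, ← Real.cos_abs φ]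
  obtain ⟨hφl, hφr⟩ := hφ
  split_ifs at hθ with h
  · rw [uIcc_of_le hφr] at hθ
    rw [abs_of_nonneg h, abs_of_nonneg (h.trans hθ.1)]
    exact Real.cos_le_cos_of_nonneg_of_le_pi h hθ.2 hθ.1
  · rw [uIcc_of_ge hφl.le] at hθ
    rw [abs_of_neg (not_le.mp h), abs_of_neg (hθ.2.trans_lt (not_le.mp h))]
    exact Real.cos_le_cos_of_nonneg_of_le_pi (by linarith) (by linarith [hθ.1]) (by linarith [hθ.2])

theorem exists_arc_to_neg_norm (z : ℂ) :
    ∃ t : Set ℂ, IsPreconnected t ∧ z ∈ t ∧ (-‖z‖ : ℂ) ∈ t ∧ ∀ w ∈ t, ‖w‖ = ‖z‖ ∧ w.re ≤ z.re := by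
  set e : ℝ := if 0 ≤ z.arg then Real.pi else -Real.pi
  have hcircle : Continuous fun θ : ℝ => (‖z‖ : ℂ) * exp (θ * I) := by fun_prop
  refine ⟨(fun θ : ℝ => (‖z‖ : ℂ) * exp (θ * I)) '' uIcc z.arg e,
    isPreconnected_uIcc.image _ hcircle.continuousOn,
    ⟨z.arg, left_mem_uIcc, norm_mul_exp_arg_mul_I z⟩, ⟨e, right_mem_uIcc, ?_⟩, ?_⟩
  · have : exp (e * I) = -1 := by
      by_cases h : 0 ≤ z.arg <;> simp [e, h, exp_neg, exp_pi_mul_I]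
    change (‖z‖ : ℂ) * exp (e * I) = _
    rw [this, mul_neg_one]
  · rintro w ⟨θ, hθ, rfl⟩
    refine ⟨by simp, ?_⟩
    rw [re_ofReal_mul, exp_ofReal_mul_I_re, ← norm_mul_cos_arg z]
    exact mul_le_mul_of_nonneg_left
      (cos_le_cos_of_mem_uIcc_arg ⟨neg_pi_lt_arg z, arg_le_pi z⟩ hθ) (norm_nonneg z)

theorem sq_norm_sub_ofReal_le {z w : ℂ} {ρ : ℝ} (hρ : 0 ≤ ρ) (hn : ‖w‖ = ‖z‖)
    (hre : w.re ≤ z.re) : ‖z - ρ‖ ^ 2 ≤ ‖w - ρ‖ ^ 2 := by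
  have hsq : ∀ u : ℂ, ‖u - ρ‖ ^ 2 = ‖u‖ ^ 2 - 2 * ρ * u.re + ρ ^ 2 := fun u => by
    simp only [Complex.sq_norm, normSq_apply, sub_re, sub_im, ofReal_re, ofReal_im]
    ring
  rw [hsq, hsq, hn]
  nlinarith

theorem isPreconnected_ball_inter_setOf_lt_sq_norm_sub_ofReal (ρ T : ℝ) (hρ : 0 ≤ ρ) :
    IsPreconnected (ball (0 : ℂ) 1 ∩ {z | T < ‖z - ρ‖ ^ 2}) := by
  set I : Set ℝ := {s | 0 ≤ s ∧ s < 1 ∧ T < (s + ρ) ^ 2}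
  have hI : I.OrdConnected := ⟨fun x hx y hy s hs => ⟨hx.1.trans hs.1, hs.2.trans_lt hy.2.1,
    hx.2.2.trans_le (pow_le_pow_left₀ (by linarith [hx.1]) (by linarith [hs.1]) 2)⟩⟩
  have hneg : ∀ s : ℝ, 0 ≤ s → ‖-(s : ℂ) - ρ‖ = s + ρ := fun s hs => by
    rw [← neg_add', norm_neg, ← ofReal_add, norm_real, Real.norm_of_nonneg (by linarith)]
  refine isPreconnected_of_forall_exists_inter
    (hI.isPreconnected.image _ (continuous_ofReal.neg).continuousOn) ?_ ?_
  · rintro _ ⟨s, ⟨hs0, hs1, hsT⟩, rfl⟩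
    refine ⟨?_, ?_⟩
    · simpa [mem_ball_zero_iff, abs_of_nonneg hs0] using hs1
    · simpa [hneg s hs0] using hsT
  · rintro z ⟨hz1, hzT⟩
    obtain ⟨t, ht, hzt, hend, hcirc⟩ := exists_arc_to_neg_norm z
    refine ⟨t, fun w hw => ⟨?_, ?_⟩, ht, hzt, -‖z‖, ⟨hend, ‖z‖, ?_, rfl⟩⟩
    · rw [mem_ball_zero_iff, (hcirc w hw).1]
      exact mem_ball_zero_iff.mp hz1
    · exact hzT.trans_le (sq_norm_sub_ofReal_le hρ (hcirc w hw).1 (hcirc w hw).2)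
    · refine ⟨norm_nonneg z, mem_ball_zero_iff.mp hz1, ?_⟩
      rw [← hneg _ (norm_nonneg z)]
      exact hzT.trans_le (sq_norm_sub_ofReal_le hρ (hcirc _ hend).1 (hcirc _ hend).2)

theorem isPreconnected_ball_inter_setOf_lt_sq_norm_sub (c : ℂ) (T : ℝ) :
    IsPreconnected (ball (0 : ℂ) 1 ∩ {z | T < ‖z - c‖ ^ 2}) := by
  set ω := exp (c.arg * I)
  have hω : ‖ω‖ = 1 := norm_exp_ofReal_mul_I _
  have hc : ω * ‖c‖ = c := by rw [mul_comm]; exact norm_mul_exp_arg_mul_I c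
  have hω₀ : ω ≠ 0 := exp_ne_zero _
  have hrot : ball (0 : ℂ) 1 ∩ {z | T < ‖z - (‖c‖ : ℂ)‖ ^ 2} =
      Homeomorph.mulLeft₀ ω hω₀ ⁻¹' (ball (0 : ℂ) 1 ∩ {z | T < ‖z - c‖ ^ 2}) := by
    ext z
    simp only [mem_inter_iff, mem_ball_zero_iff, mem_ofPred_eq, mem_preimage,
      Homeomorph.coe_mulLeft₀, norm_mul, hω, one_mul]
    rw [show ω * z - c = ω * (z - ‖c‖) by rw [mul_sub, hc], norm_mul, hω, one_mul]
  rw [← (Homeomorph.mulLeft₀ ω hω₀).isPreconnected_preimage, ← hrot]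
  exact isPreconnected_ball_inter_setOf_lt_sq_norm_sub_ofReal _ T (norm_nonneg c)

theorem sq_norm_add_mul_sub_sq_norm_sub_mul_convexComb (α β γ x y : ℂ) {a b : ℝ} (hab : a + b = 1) :
    ‖α + β * (a • x + b • y)‖ ^ 2 - ‖γ - α * (a • x + b • y)‖ ^ 2 =
      a * (‖α + β * x‖ ^ 2 - ‖γ - α * x‖ ^ 2) + b * (‖α + β * y‖ ^ 2 - ‖γ - α * y‖ ^ 2) +
        a * b * (‖α‖ ^ 2 - ‖β‖ ^ 2) * ‖x - y‖ ^ 2 := by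
  obtain rfl := eq_sub_of_add_eq' hab
  simp only [Complex.sq_norm, normSq_apply, real_smul, mul_re, mul_im, add_re, add_im, sub_re,
    sub_im, ofReal_re, ofReal_im]
  ring

theorem sq_norm_add_mul_sub_sq_norm_sub_mul_eq (α β γ z : ℂ) :
    (‖β‖ ^ 2 - ‖α‖ ^ 2) * (‖α + β * z‖ ^ 2 - ‖γ - α * z‖ ^ 2) =
      ‖((‖β‖ ^ 2 - ‖α‖ ^ 2 : ℝ) : ℂ) * z + conj (conj α * β + conj γ * α)‖ ^ 2 -
        (‖conj α * β + conj γ * α‖ ^ 2 + (‖β‖ ^ 2 - ‖α‖ ^ 2) * (‖γ‖ ^ 2 - ‖α‖ ^ 2)) := by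
  simp only [Complex.sq_norm, normSq_apply, mul_re, mul_im, add_re, add_im, sub_re, sub_im,
    conj_re, conj_im, ofReal_re, ofReal_im]
  ring

theorem isPreconnected_ball_inter_setOf_norm_sub_mul_lt (α β γ : ℂ) :
    IsPreconnected (ball (0 : ℂ) 1 ∩ {z | ‖γ - α * z‖ < ‖α + β * z‖}) := by
  have hsq : {z : ℂ | ‖γ - α * z‖ < ‖α + β * z‖} =
      {z | z ∈ univ ∧ 0 < ‖α + β * z‖ ^ 2 - ‖γ - α * z‖ ^ 2} := by
    ext z
    simp only [mem_ofPred_eq, mem_univ, true_and, sub_pos]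
    exact (sq_lt_sq₀ (norm_nonneg _) (norm_nonneg _)).symm
  rcases le_or_gt ‖β‖ ‖α‖ with hβα | hαβ
  · have hconcave : ConcaveOn ℝ univ fun z => ‖α + β * z‖ ^ 2 - ‖γ - α * z‖ ^ 2 := by
      refine ⟨convex_univ, fun x _ y _ a b ha hb hab => ?_⟩
      dsimp only
      rw [sq_norm_add_mul_sub_sq_norm_sub_mul_convexComb α β γ x y hab, smul_eq_mul, smul_eq_mul]
      have : 0 ≤ ‖α‖ ^ 2 - ‖β‖ ^ 2 := by nlinarith [norm_nonneg β]
      have := mul_nonneg (mul_nonneg (mul_nonneg ha hb) this) (sq_nonneg ‖x - y‖)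
      linarith
    rw [hsq]
    exact ((convex_ball 0 1).inter (hconcave.convex_gt 0)).isPreconnected
  · set k : ℝ := ‖β‖ ^ 2 - ‖α‖ ^ 2
    set e := conj α * β + conj γ * α
    set T := ‖e‖ ^ 2 + k * (‖γ‖ ^ 2 - ‖α‖ ^ 2)
    have hk : 0 < k := by simp only [k]; nlinarith [norm_nonneg α]
    have hcentre : ∀ z : ℂ, ‖(k : ℂ) * z + conj e‖ = k * ‖z - (-conj e / k)‖ := fun z => by
      have hk₀ : (k : ℂ) ≠ 0 := ofReal_ne_zero.mpr hk.ne'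
      rw [show (k : ℂ) * z + conj e = k * (z - (-conj e / k)) by field_simp; ring, norm_mul,
        norm_real, Real.norm_of_nonneg hk.le]
    have hdisc : {z : ℂ | ‖γ - α * z‖ < ‖α + β * z‖} =
        {z | T / k ^ 2 < ‖z - (-conj e / k)‖ ^ 2} := by
      ext z
      simp only [hsq, mem_ofPred_eq, mem_univ, true_and]
      rw [div_lt_iff₀' (by positivity), ← mul_pos_iff_of_pos_left hk,
        sq_norm_add_mul_sub_sq_norm_sub_mul_eq, hcentre, mul_pow, sub_pos]
    rw [hdisc]
    exact isPreconnected_ball_inter_setOf_lt_sq_norm_sub _ _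

theorem setOf_exists_eq_add_smul {K : Type*} [Field K] {a v : K × K} (hv : v ≠ 0) :
    {p | ∃ lam : K, p = a + lam • v} = {p | v.2 * p.1 + -v.1 * p.2 = v.2 * a.1 + -v.1 * a.2} := by
  ext p
  simp only [mem_ofPred_eq]
  constructor
  · rintro ⟨lam, rfl⟩
    simp only [Prod.fst_add, Prod.snd_add, Prod.smul_fst, Prod.smul_snd, smul_eq_mul]
    ring
  · intro hp
    by_cases h₁ : v.1 = 0
    · have h₂ : v.2 ≠ 0 := fun h₂ => hv (Prod.ext h₁ h₂)
      refine ⟨(p.2 - a.2) / v.2, Prod.ext ?_ ?_⟩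
      · simp only [h₁, neg_zero, zero_mul, add_zero] at hp
        simp [h₁, mul_left_cancel₀ h₂ hp]
      · simp [div_mul_cancel₀ _ h₂]
    · refine ⟨(p.1 - a.1) / v.1, Prod.ext ?_ ?_⟩
      · simp [div_mul_cancel₀ _ h₁]
      · simp only [Prod.snd_add, Prod.smul_snd, smul_eq_mul]
        field_simp
        linear_combination -hp

theorem isConnected_symBidisc_inter_of_forall_mem_iff (c : ℂ) {L : Set (ℂ × ℂ)}
    (hL : ∀ z w, (z + w, z * w) ∈ L ↔ z = c ∨ w = c) (hne : (symBidisc ∩ L).Nonempty) :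
    IsConnected (symBidisc ∩ L) := by
  have hc : c ∈ ball (0 : ℂ) 1 := by
    obtain ⟨_, ⟨z, w, hz, hw, rfl⟩, hp⟩ := hne
    rcases (hL z w).1 hp with rfl | rfl
    exacts [hz, hw]
  have hset : symBidisc ∩ L = (fun w => (c + w, c * w)) '' ball 0 1 := by
    ext p
    constructor
    · rintro ⟨⟨z, w, hz, hw, rfl⟩, hp⟩
      rcases (hL z w).1 hp with rfl | rfl
      exacts [⟨w, hw, rfl⟩, ⟨z, hz, by rw [add_comm, mul_comm]⟩]
    · rintro ⟨w, hw, rfl⟩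
      exact ⟨⟨c, w, hc, hw, rfl⟩, (hL c w).2 (Or.inl rfl)⟩
  rw [hset]
  exact (isConnected_ball one_pos).image _ (by fun_prop)

theorem symBidisc_inter_setOf_eq_image {α β γ : ℂ}
    (hden : ∀ z w, α * (z + w) + β * (z * w) = γ → α + β * z ≠ 0) :
    symBidisc ∩ {p | α * p.1 + β * p.2 = γ} =
      (fun z => (z + (γ - α * z) / (α + β * z), z * ((γ - α * z) / (α + β * z)))) ''
        (ball 0 1 ∩ {z | ‖γ - α * z‖ < ‖α + β * z‖}) := by
  ext p
  constructor
  · rintro ⟨⟨z, w, hz, hw, rfl⟩, hp : α * (z + w) + β * (z * w) = γ⟩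
    have hzw := hden z w hp
    have hw' : w = (γ - α * z) / (α + β * z) := by
      rw [eq_div_iff hzw]
      linear_combination hp
    refine ⟨z, ⟨hz, ?_⟩, by subst hw'; rfl⟩
    rw [mem_ball_zero_iff] at hw
    rw [mem_ofPred_eq, show γ - α * z = w * (α + β * z) by linear_combination -hp, norm_mul]
    exact mul_lt_of_lt_one_left (norm_pos_iff.mpr hzw) hw
  · rintro ⟨z, ⟨hz, hzw⟩, rfl⟩
    have hden' : α + β * z ≠ 0 := norm_pos_iff.mp ((norm_nonneg _).trans_lt hzw)
    refine ⟨⟨z, _, hz, ?_, rfl⟩, ?_⟩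
    · rwa [mem_ball_zero_iff, norm_div, div_lt_one (norm_pos_iff.mpr hden')]
    · show α * (z + _) + β * (z * _) = γ
      linear_combination div_mul_cancel₀ (γ - α * z) hden'

theorem isConnected_symBidisc_inter_setOf {α β γ : ℂ} (hαβ : α ≠ 0 ∨ β ≠ 0)
    (hne : (symBidisc ∩ {p | α * p.1 + β * p.2 = γ}).Nonempty) :
    IsConnected (symBidisc ∩ {p | α * p.1 + β * p.2 = γ}) := by
  by_cases hdeg : β ≠ 0 ∧ α ^ 2 + β * γ = 0
  · refine isConnected_symBidisc_inter_of_forall_mem_iff (-α / β) (fun z w => ?_) hne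
    have hfactor : β * (α * (z + w) + β * (z * w) - γ) = (β * z + α) * (β * w + α) := by
      linear_combination -hdeg.2
    have hroot : ∀ u, u = -α / β ↔ β * u + α = 0 := fun u => by
      rw [eq_div_iff hdeg.1, ← add_eq_zero_iff_eq_neg, mul_comm]
    rw [mem_ofPred_eq, ← sub_eq_zero, ← mul_right_inj' hdeg.1, hfactor, mul_zero, mul_eq_zero,
      hroot, hroot]
  · have hden : ∀ z w, α * (z + w) + β * (z * w) = γ → α + β * z ≠ 0 := by
      intro z w h h0
      refine hdeg ⟨fun hβ => ?_, by linear_combination (α + β * w) * h0 - β * h⟩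
      simp only [hβ, zero_mul, add_zero] at h0
      exact hαβ.elim (· h0) (· hβ)
    rw [symBidisc_inter_setOf_eq_image hden] at hne ⊢
    refine ⟨hne, (isPreconnected_ball_inter_setOf_norm_sub_mul_lt α β γ).image _ ?_⟩
    have : ∀ z ∈ ball 0 1 ∩ {z | ‖γ - α * z‖ < ‖α + β * z‖}, α + β * z ≠ 0 :=
      fun z hz => norm_pos_iff.mp ((norm_nonneg _).trans_lt hz.2)
    fun_prop (disch := assumption)

/-- The intersection of the symmetrized bidisc with any complex affine line is
connected whenever it is nonempty. -/
theorem symBidisc_inter_line_connected (a v : ℂ × ℂ) (hv : v ≠ 0)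
    (L : Set (ℂ × ℂ)) (hL : L = {p | ∃ lam : ℂ, p = a + lam • v})
    (hne : (symBidisc ∩ L).Nonempty) :
    IsConnected (symBidisc ∩ L) := by
  rw [hL, setOf_exists_eq_add_smul hv] at hne ⊢
  refine isConnected_symBidisc_inter_setOf ?_ hne
  by_contra! h
  exact hv (Prod.ext (neg_eq_zero.mp h.2) h.1)
end

section
/- Let x ∈ [-1,1] and define A = { (λ_1 + λ_2 - 2x)/(λ_1 λ_2 - 1) : λ_1, λ_2 ∈ D }. Then A is a simply connected open subset of ℂ. -/
/-!
The Cayley transform `z ↦ (z - i)/(z + i)` maps the upper half-plane `H` onto the disc and turns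
`(λ₁ + λ₂ - 2x)/(λ₁λ₂ - 1)` into `x + i F(z₁, z₂)`, where
`F(z₁, z₂) = ((1 - x) z₁ z₂ + (1 + x))/(z₁ + z₂)`. Every value of `F` on `H × H` is already taken
on the diagonal: `(1 - x) z² + (1 + x) = 2 F(z₁, z₂) z` has a root in `H`. For `x = ±1` it is an
explicit mean of `z₁, z₂`; otherwise both roots would be real and `(z₁ - m)(z₂ - m)` a nonnegative
real for some real `m`, which is impossible for `z₁, z₂ ∈ H`. The same obstruction makes `z ↦ F(z, z)` injective on `H`, so `A` is the image
of the convex set `H` under an injective holomorphic map; by the open mapping theorem it is open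
and homeomorphic to `H`.
-/

open Metric Complex Set Topology

namespace Complex

theorem mul_ne_ofReal_of_im_pos {z w : ℂ} (hz : 0 < z.im) (hw : 0 < w.im) {c : ℝ} (hc : 0 ≤ c) :
    z * w ≠ c := by
  intro h
  have hre := congrArg re h
  have him := congrArg im h
  simp only [mul_re, mul_im, ofReal_re, ofReal_im] at hre him
  have key : w.im * (z.re ^ 2 + z.im ^ 2) = -(c * z.im) := by
    linear_combination -(z.im * hre) + z.re * him
  nlinarith [mul_nonneg hc hz.le, mul_pos hw (pow_pos hz 2), mul_nonneg hw.le (sq_nonneg z.re)]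

theorem im_eq_zero_of_mul_eq_ofReal {u v : ℂ} (hu : u.im ≤ 0) (hv : v.im ≤ 0) {c : ℝ}
    (hc : 0 < c) (h : u * v = c) : u.im = 0 := by
  have hre := congrArg re h
  have him := congrArg im h
  simp only [mul_re, mul_im, ofReal_re, ofReal_im] at hre him
  have key : v.im * (u.re ^ 2 + u.im ^ 2) = -(c * u.im) := by
    linear_combination -(u.im * hre) + u.re * him
  nlinarith [mul_nonneg (neg_nonneg.2 hv) (add_nonneg (sq_nonneg u.re) (sq_nonneg u.im))]

theorem add_ne_zero_of_im_pos {z w : ℂ} (hz : 0 < z.im) (hw : 0 < w.im) : z + w ≠ 0 := by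
  intro h
  have := congrArg im h
  simp only [add_im, zero_im] at this
  linarith

theorem inv_im_neg_iff {z : ℂ} : z⁻¹.im < 0 ↔ 0 < z.im := by
  rw [inv_im, neg_div, neg_lt_zero]
  refine ⟨fun h => pos_of_mul_pos_left h (inv_nonneg.2 (normSq_nonneg z)), fun h => ?_⟩
  exact div_pos h (normSq_pos.2 fun h0 => by simp [h0] at h)

noncomputable def cayley (z : ℂ) : ℂ := (z - I) / (z + I)

theorem cayley_mem_ball {z : ℂ} (hz : 0 < z.im) : cayley z ∈ ball (0 : ℂ) 1 := by
  rw [mem_ball_zero_iff, cayley, norm_div, div_lt_one (norm_pos_iff.2 (add_ne_zero_of_im_pos hz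
    (by simp))), ← sq_lt_sq₀ (norm_nonneg _) (norm_nonneg _), Complex.sq_norm, Complex.sq_norm]
  simp [normSq_apply]
  nlinarith

theorem exists_cayley_eq {l : ℂ} (hl : l ∈ ball (0 : ℂ) 1) : ∃ z, 0 < z.im ∧ cayley z = l := by
  rw [mem_ball_zero_iff, ← sq_lt_one_iff₀ (norm_nonneg _), Complex.sq_norm] at hl
  have h1 : 1 - l ≠ 0 := by
    intro h
    rw [← sub_eq_zero.1 h] at hl
    simp at hl
  refine ⟨I * (1 + l) / (1 - l), ?_, ?_⟩
  · rw [div_im, div_sub_div_same, lt_div_iff₀ (normSq_pos.2 h1)]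
    simp [normSq_apply] at hl ⊢
    nlinarith
  · rw [cayley]
    field_simp
    ring_nf

end Complex

noncomputable def bilinQuot (a b : ℝ) (z w : ℂ) : ℂ := (a * z * w + b) / (z + w)

theorem cayley_pair_eq (x : ℝ) {z₁ z₂ : ℂ} (h₁ : 0 < z₁.im) (h₂ : 0 < z₂.im) :
    (cayley z₁ + cayley z₂ - 2 * x) / (cayley z₁ * cayley z₂ - 1) =
      x + I * bilinQuot (1 - x) (1 + x) z₁ z₂ := by
  have e₁ := add_ne_zero_of_im_pos h₁ (by simp : 0 < I.im)
  have e₂ := add_ne_zero_of_im_pos h₂ (by simp : 0 < I.im)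
  have e := add_ne_zero_of_im_pos h₁ h₂
  have hden : cayley z₁ * cayley z₂ - 1 = -2 * I * (z₁ + z₂) / ((z₁ + I) * (z₂ + I)) := by
    rw [cayley, cayley]
    field_simp
    ring
  rw [hden, cayley, cayley, bilinQuot]
  push_cast
  field_simp
  linear_combination (-2 * z₁ * z₂ * (1 - x)) * I_sq

theorem exists_im_pos_mul_self_add_eq {a b : ℝ} (ha : 0 < a) (hb : 0 < b) {z₁ z₂ F : ℂ}
    (h₁ : 0 < z₁.im) (h₂ : 0 < z₂.im) (hF : a * z₁ * z₂ + b = F * (z₁ + z₂)) :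
    ∃ z, 0 < z.im ∧ a * z * z + b = F * (z + z) := by
  have ha' : (a : ℂ) ≠ 0 := ofReal_ne_zero.2 ha.ne'
  obtain ⟨s, hs⟩ := IsAlgClosed.exists_eq_mul_self (F ^ 2 - a * b)
  set u := (F + s) / a
  set v := (F - s) / a
  have hsum : a * (u + v) = 2 * F := by
    simp only [u, v]
    field_simp
    ring
  have hprod : a * (u * v) = b := by
    simp only [u, v]
    field_simp
    linear_combination hs
  by_contra! hno
  have hu : u.im ≤ 0 := not_lt.1 fun h => hno u h (by linear_combination u * hsum - hprod)
  have hv : v.im ≤ 0 := not_lt.1 fun h => hno v h (by linear_combination v * hsum - hprod)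
  have hprod' : u * v = (b / a : ℝ) := by
    push_cast
    rw [← hprod]
    field_simp
  have hu₀ := im_eq_zero_of_mul_eq_ofReal hu hv (c := b / a) (by positivity) hprod'
  have hv₀ := im_eq_zero_of_mul_eq_ofReal hv hu (c := b / a) (by positivity)
    (by rw [mul_comm]; exact hprod')
  -- with both roots real, `hF` says that `(z₁ - m) (z₂ - m) = d ^ 2` for `m, d = (u ± v) / 2`
  have hm : (((u.re + v.re) / 2 : ℝ) : ℂ) = (u + v) / 2 := by
    apply Complex.ext <;> simp [hu₀, hv₀]
  have hd : (((u.re - v.re) / 2 : ℝ) : ℂ) = (u - v) / 2 := by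
    apply Complex.ext <;> simp [hu₀, hv₀]
  apply mul_ne_ofReal_of_im_pos (z := z₁ - ((u.re + v.re) / 2 : ℝ))
    (w := z₂ - ((u.re + v.re) / 2 : ℝ)) (by simpa using h₁) (by simpa using h₂)
    (sq_nonneg ((u.re - v.re) / 2))
  push_cast [hm, hd]
  apply mul_left_cancel₀ ha'
  linear_combination hF - (z₁ + z₂) / 2 * hsum + hprod

theorem exists_im_pos_bilinQuot_self_eq {a b : ℝ} (ha : 0 ≤ a) (hb : 0 ≤ b) {z₁ z₂ : ℂ}
    (h₁ : 0 < z₁.im) (h₂ : 0 < z₂.im) :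
    ∃ z, 0 < z.im ∧ bilinQuot a b z z = bilinQuot a b z₁ z₂ := by
  simp only [bilinQuot]
  have h₁₂ := add_ne_zero_of_im_pos h₁ h₂
  rcases ha.eq_or_lt with rfl | ha
  · exact ⟨(z₁ + z₂) / 2, by simp; linarith, by rw [add_halves]; simp⟩
  rcases hb.eq_or_lt with rfl | hb
  · -- twice the harmonic mean
    have hz₁ : z₁ ≠ 0 := fun h => by simp [h] at h₁
    have hz₂ : z₂ ≠ 0 := fun h => by simp [h] at h₂
    set w := z₁ * z₂ / (z₁ + z₂)
    have hw_inv : w⁻¹ = z₁⁻¹ + z₂⁻¹ := by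
      simp only [w]
      field_simp
      ring
    have hw : 0 < w.im := inv_im_neg_iff.1 <| by
      rw [hw_inv, add_im]
      exact add_neg (inv_im_neg_iff.2 h₁) (inv_im_neg_iff.2 h₂)
    refine ⟨2 * w, by simpa using hw, ?_⟩
    rw [ofReal_zero, add_zero, add_zero]
    simp only [w]
    field_simp
    ring
  obtain ⟨z, hz, hzF⟩ := exists_im_pos_mul_self_add_eq ha hb h₁ h₂
    (div_mul_cancel₀ (a * z₁ * z₂ + b : ℂ) h₁₂).symm
  exact ⟨z, hz, by rw [div_eq_iff (add_ne_zero_of_im_pos hz hz), hzF]⟩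

theorem injOn_bilinQuot_self {a b : ℝ} (ha : 0 ≤ a) (hb : 0 ≤ b) (hab : 0 < a + b) :
    InjOn (fun z => bilinQuot a b z z) {z | 0 < z.im} := by
  intro z hz w hw h
  simp only [mem_ofPred_eq, bilinQuot] at hz hw h
  rw [div_eq_div_iff (add_ne_zero_of_im_pos hz hz) (add_ne_zero_of_im_pos hw hw)] at h
  have hfac : (z - w) * (a * (z * w) - b) = 0 := by linear_combination h / 2
  refine sub_eq_zero.1 ((mul_eq_zero.1 hfac).resolve_right fun h' => ?_)
  rcases ha.eq_or_lt with rfl | ha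
  · simp at h'
    linarith
  refine mul_ne_ofReal_of_im_pos hz hw (div_nonneg hb ha.le) ?_
  rw [ofReal_div, eq_div_iff (ofReal_ne_zero.2 ha.ne')]
  linear_combination h'

theorem analyticOnNhd_bilinQuot_self (a b : ℝ) :
    AnalyticOnNhd ℂ (fun z => bilinQuot a b z z) {z | 0 < z.im} := by
  intro z hz
  simp only [bilinQuot]
  have := add_ne_zero_of_im_pos hz hz
  fun_prop (disch := assumption)

theorem AnalyticOnNhd.isOpen_image_of_injOn {f : ℂ → ℂ} {U s : Set ℂ} (hf : AnalyticOnNhd ℂ f U)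
    (hU : IsPreconnected U) (hinj : InjOn f U) (hsU : s ⊆ U) (hs : IsOpen s) :
    IsOpen (f '' s) := by
  rcases hf.is_constant_or_isOpen hU with ⟨w, hw⟩ | h
  · have hsub : s.Subsingleton := fun p hp q hq =>
      hinj (hsU hp) (hsU hq) (by rw [hw p (hsU hp), hw q (hsU hq)])
    rcases hsub.eq_empty_or_singleton with rfl | ⟨p, rfl⟩
    · simp
    · exact absurd hs (not_isOpen_singleton p)
  · exact h s hsU hs

theorem AnalyticOnNhd.contractibleSpace_image_of_injOn {f : ℂ → ℂ} {U : Set ℂ}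
    (hf : AnalyticOnNhd ℂ f U) (hU : IsOpen U) (hUc : Convex ℝ U) (hne : U.Nonempty)
    (hinj : InjOn f U) : ContractibleSpace (f '' U) := by
  have hopen : IsOpenMap (U.domRestrict f) := fun V hV => by
    rw [domRestrict_eq, image_comp]
    exact hf.isOpen_image_of_injOn hUc.isPreconnected hinj (Subtype.coe_image_subset U V)
      (hU.isOpenMap_subtype_val V hV)
  have hemb := IsOpenEmbedding.of_continuous_injective_isOpenMap
    (continuousOn_iff_continuous_domRestrict.1 hf.continuousOn) hinj.injective hopen
  have := hUc.contractibleSpace hne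
  exact (hemb.isEmbedding.toHomeomorph.trans
    (Homeomorph.setCongr (range_domRestrict f U))).symm.contractibleSpace

/-- For `x ∈ [-1,1]`, the set `A = {(λ₁+λ₂-2x)/(λ₁λ₂-1) : λ₁, λ₂ ∈ 𝔻}` is a simply
connected open subset of `ℂ`. -/
theorem A_open_simplyConnected (x : ℝ) (hx : x ∈ Set.Icc (-1 : ℝ) 1)
    (A : Set ℂ)
    (hA : A = {w | ∃ lam1 ∈ ball (0 : ℂ) 1, ∃ lam2 ∈ ball (0 : ℂ) 1,
      w = (lam1 + lam2 - 2 * (x : ℂ)) / (lam1 * lam2 - 1)}) :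
    IsOpen A ∧ SimplyConnectedSpace A := by
  have ha : 0 ≤ 1 - x := by linarith [hx.2]
  have hb : 0 ≤ 1 + x := by linarith [hx.1]
  set H : Set ℂ := {z | 0 < z.im}
  set g : ℂ → ℂ := fun z => x + I * bilinQuot (1 - x) (1 + x) z z
  have hA_eq : A = g '' H := by
    subst hA
    ext w
    constructor
    · rintro ⟨_, hl₁, _, hl₂, rfl⟩
      obtain ⟨z₁, h₁, rfl⟩ := exists_cayley_eq hl₁
      obtain ⟨z₂, h₂, rfl⟩ := exists_cayley_eq hl₂
      obtain ⟨z, hz, hzeq⟩ := exists_im_pos_bilinQuot_self_eq ha hb h₁ h₂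
      exact ⟨z, hz, by simp only [g, hzeq, cayley_pair_eq x h₁ h₂]⟩
    · rintro ⟨z, hz, rfl⟩
      exact ⟨_, cayley_mem_ball hz, _, cayley_mem_ball hz, (cayley_pair_eq x hz hz).symm⟩
  have hinj : InjOn g H :=
    ((add_right_injective _).comp (mul_right_injective₀ I_ne_zero)).comp_injOn
      (injOn_bilinQuot_self ha hb (by linarith))
  have hg : AnalyticOnNhd ℂ g H := fun z hz =>
    analyticAt_const.add (analyticAt_const.mul (analyticOnNhd_bilinQuot_self _ _ z hz))
  have hH : IsOpen H := isOpen_lt continuous_const continuous_im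
  have hHc : Convex ℝ H := convex_halfSpace_im_gt 0
  have := hg.contractibleSpace_image_of_injOn hH hHc ⟨I, by simp [H]⟩ hinj
  rw [hA_eq]
  exact ⟨hg.isOpen_image_of_injOn hHc.isPreconnected hinj subset_rfl hH, inferInstance⟩
end

section
/- The symmetrized polydisc G_n is linearly convex: for every point z in ℂⁿ \ G_n there is a complex affine hyperplane through z disjoint from G_n. -/
open Metric Finset

/-- The map whose `k`-th component is the `(k+1)`-st elementary symmetric polynomial. -/
noncomputable def symPoly (n : ℕ) (μ : Fin n → ℂ) : Fin n → ℂ :=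
  fun k => ∑ s ∈ Finset.powersetCard ((k : ℕ) + 1) Finset.univ, ∏ i ∈ s, μ i

/-- The symmetrized `n`-disc `𝔾ₙ = πₙ(𝔻ⁿ)`. -/
def symPolydisc (n : ℕ) : Set (Fin n → ℂ) :=
  {z | ∃ μ : Fin n → ℂ, (∀ i, ‖μ i‖ < 1) ∧ symPoly n μ = z}

/-!
By Vieta, `z = πₙ(μ)` exactly when `p_z(t) = tⁿ - z₁tⁿ⁻¹ + ⋯ + (-1)ⁿzₙ` equals `∏ (t - μᵢ)`,
and `πₙ` is onto by the fundamental theorem of algebra. If `z ∉ 𝔾ₙ`, some root `λ = μᵢ` of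
`p_z` has `|λ| ≥ 1`. Since `w ↦ p_w(λ)` is affine, `{w | p_w(λ) = 0}` is a complex affine
hyperplane through `z`, and it misses `𝔾ₙ`: for `w = πₙ(ν)` with `ν ∈ 𝔻ⁿ`,
`p_w(λ) = ∏ (λ - νⱼ) ≠ 0`.
-/

open Polynomial

theorem Multiset.exists_map_univ_val_eq {α : Type*} {n : ℕ} (s : Multiset α)
    (hs : Multiset.card s = n) : ∃ f : Fin n → α, univ.val.map f = s := by
  subst hs
  refine ⟨fun i => s.toList.get (i.cast s.length_toList.symm), ?_⟩
  rw [Fin.univ_val_map, ← List.ofFn_congr s.length_toList, List.ofFn_get, Multiset.coe_toList]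

section VietaPoly

variable {R : Type*} [CommRing R] {n : ℕ}

noncomputable def vietaPoly (n : ℕ) (z : Fin n → R) : R[X] :=
  X ^ n + ∑ j : Fin n, C ((-1) ^ ((j : ℕ) + 1) * z j) * X ^ (n - 1 - (j : ℕ))

def vietaWeight (n : ℕ) (t : R) : Fin n → R :=
  fun j => (-1) ^ ((j : ℕ) + 1) * t ^ (n - 1 - (j : ℕ))

theorem vietaPoly_coeff (z : Fin n → R) (j : Fin n) :
    (vietaPoly n z).coeff (n - 1 - j) = (-1) ^ ((j : ℕ) + 1) * z j := by
  have hj := j.2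
  rw [vietaPoly, coeff_add, coeff_X_pow, if_neg (by omega), finsetSum_coeff, zero_add,
    Finset.sum_eq_single j]
  · rw [coeff_C_mul, coeff_X_pow, if_pos rfl, mul_one]
  · intro i _ hij
    have := i.2
    rw [coeff_C_mul, coeff_X_pow, if_neg (fun h => hij (Fin.ext (by omega))), mul_zero]
  · simp

theorem vietaPoly_injective : Function.Injective (vietaPoly (R := R) n) := by
  intro y z h
  funext j
  have hj := vietaPoly_coeff y j
  rw [h, vietaPoly_coeff] at hj
  exact ((isUnit_neg_one (α := R)).pow _).mul_left_cancel hj.symm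

theorem degree_sum_fin_rev_lt (c : Fin n → R) :
    (∑ j : Fin n, C (c j) * X ^ (n - 1 - (j : ℕ))).degree < (n : WithBot ℕ) :=
  (degree_sum_le _ _).trans_lt <| (Finset.sup_lt_iff (WithBot.bot_lt_coe n)).2 fun j _ =>
    (degree_C_mul_X_pow_le _ _).trans_lt <| Nat.cast_lt.2 (by have := j.2; omega)

theorem vietaPoly_monic (z : Fin n → R) : (vietaPoly n z).Monic :=
  monic_X_pow_add (degree_sum_fin_rev_lt _)

theorem natDegree_vietaPoly [Nontrivial R] (z : Fin n → R) : (vietaPoly n z).natDegree = n := by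
  rw [vietaPoly, natDegree_add_eq_left_of_degree_lt, natDegree_X_pow]
  rw [degree_X_pow]
  exact degree_sum_fin_rev_lt _

theorem eval_vietaPoly (z : Fin n → R) (t : R) :
    (vietaPoly n z).eval t = t ^ n + ∑ j, z j * vietaWeight n t j := by
  simp only [vietaPoly, vietaWeight, eval_add, eval_pow, eval_X, eval_finsetSum, eval_mul,
    eval_C]
  congr 1
  exact Finset.sum_congr rfl fun j _ => by ring

theorem sum_sub_mul_vietaWeight (y z : Fin n → R) (t : R) :
    ∑ j, (y j - z j) * vietaWeight n t j = (vietaPoly n y).eval t - (vietaPoly n z).eval t := by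
  simp only [eval_vietaPoly, sub_mul, Finset.sum_sub_distrib]
  ring

end VietaPoly

theorem symPoly_apply_eq_esymm (n : ℕ) (μ : Fin n → ℂ) (k : Fin n) :
    symPoly n μ k = (univ.val.map μ).esymm (k + 1) :=
  (Finset.esymm_map_val μ univ _).symm

theorem prod_X_sub_C_eq_vietaPoly_symPoly (n : ℕ) (μ : Fin n → ℂ) :
    ∏ i, (X - C (μ i)) = vietaPoly n (symPoly n μ) := by
  have h := Multiset.prod_X_sub_X_eq_sum_esymm (univ.val.map μ)
  rw [Multiset.map_map, Multiset.card_map, card_val, card_univ, Fintype.card_fin,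
    sum_range_succ'] at h
  refine h.trans ?_
  simp_rw [vietaPoly, symPoly_apply_eq_esymm]
  rw [Fin.sum_univ_eq_sum_range
    (fun j => C ((-1) ^ (j + 1) * (univ.val.map μ).esymm (j + 1)) * X ^ (n - 1 - j)) n]
  simp [add_comm (X ^ n), Nat.sub_sub, add_comm 1, mul_assoc, Multiset.esymm]

theorem symPoly_surjective (n : ℕ) : Function.Surjective (symPoly n) := by
  intro z
  have hsplits := IsAlgClosed.splits (vietaPoly n z)
  obtain ⟨μ, hμ⟩ := (vietaPoly n z).roots.exists_map_univ_val_eq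
    (by rw [IsAlgClosed.card_roots_eq_natDegree, natDegree_vietaPoly])
  refine ⟨μ, vietaPoly_injective ?_⟩
  rw [← prod_X_sub_C_eq_vietaPoly_symPoly, hsplits.eq_prod_roots_of_monic (vietaPoly_monic z),
    ← hμ, Multiset.map_map]
  rfl

theorem sum_sub_symPoly_mul_vietaWeight (n : ℕ) (ν μ : Fin n → ℂ) (t : ℂ) :
    ∑ j, (symPoly n ν j - symPoly n μ j) * vietaWeight n t j =
      ∏ i, (t - ν i) - ∏ i, (t - μ i) := by
  simp [sum_sub_mul_vietaWeight, ← prod_X_sub_C_eq_vietaPoly_symPoly, eval_prod]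

/-- The symmetrized polydisc is linearly convex: through every point of the complement
there is a complex affine hyperplane disjoint from `𝔾ₙ`. -/
theorem symPolydisc_linearly_convex (n : ℕ) (z : Fin n → ℂ) (hz : z ∉ symPolydisc n) :
    ∃ v : Fin n → ℂ, v ≠ 0 ∧ ∀ w ∈ symPolydisc n, ∑ i, (w i - z i) * v i ≠ 0 := by
  obtain ⟨μ, rfl⟩ := symPoly_surjective n z
  obtain ⟨i, hi⟩ : ∃ i, 1 ≤ ‖μ i‖ := by
    by_contra! h
    exact hz ⟨μ, h, rfl⟩
  have hsep : ∀ w ∈ symPolydisc n, ∑ j, (w j - symPoly n μ j) * vietaWeight n (μ i) j ≠ 0 := by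
    rintro _ ⟨ν, hν, rfl⟩
    have hroot : ∏ j, (μ i - μ j) = 0 := prod_eq_zero (mem_univ i) (sub_self _)
    rw [sum_sub_symPoly_mul_vietaWeight, hroot, sub_zero]
    exact prod_ne_zero_iff.2 fun j _ => sub_ne_zero.2 fun h => (hν j).not_ge (h ▸ hi)
  -- `v ≠ 0` since the functional does not vanish at `πₙ(0) ∈ 𝔾ₙ`
  exact ⟨vietaWeight n (μ i), fun h0 => hsep _ ⟨0, by simp, rfl⟩ (by simp [h0]), hsep⟩
end

section
/- Let n ≥ 3, t ∈ (0,1), τ ∈ ℝ, and suppose μ ∈ Dⁿ satisfies π_n(μ) = (-6iτt, 3t², -2iτt³, 0, …, 0). Then t² < 1/2. -/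
open Metric Finset

/-!
The power sum `p₂ = e₁² - 2e₂` of the coordinates of `μ` equals `-(36τ² + 6)t²`. Since
`e_k(μ) = 0` for `k ≥ 4`, at most three coordinates of `μ` are nonzero (otherwise the top
nonvanishing elementary symmetric function would be their product), so `|p₂| < 3`, whence
`6t² ≤ (36τ² + 6)t² < 3`.
-/

open MvPolynomial

theorem MvPolynomial.psum_two_eq_esymm (σ R : Type*) [Fintype σ] [CommRing R] :
    psum σ R 2 = esymm σ R 1 ^ 2 - 2 * esymm σ R 2 := by
  have h : ({a ∈ antidiagonal 2 | a.1 ∈ Set.Ioo 0 2} : Finset (ℕ × ℕ)) = {(1, 1)} := by decide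
  rw [psum_eq_mul_esymm_sub_sum σ R 2 two_pos, h, sum_singleton, psum_one, esymm_one]
  ring

theorem Finset.sum_sq_eq_esymm {ι R : Type*} [Fintype ι] [CommRing R] (f : ι → R) :
    ∑ i, f i ^ 2 = (∑ s ∈ powersetCard 1 univ, ∏ i ∈ s, f i) ^ 2
      - 2 * ∑ s ∈ powersetCard 2 univ, ∏ i ∈ s, f i := by
  simpa [psum, esymm, aeval_sum, aeval_prod] using congrArg (aeval f) (psum_two_eq_esymm ι ℤ)

theorem Finset.sum_powersetCard_prod_of_subset {ι R : Type*} [CommSemiring R] {f : ι → R}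
    {S T : Finset ι} (hST : S ⊆ T) (hf : ∀ i ∈ T, i ∉ S → f i = 0) (k : ℕ) :
    ∑ s ∈ powersetCard k T, ∏ i ∈ s, f i = ∑ s ∈ powersetCard k S, ∏ i ∈ s, f i := by
  refine (sum_subset (powersetCard_mono hST) fun s hsT hsS => ?_).symm
  rw [mem_powersetCard] at hsT
  obtain ⟨i, his, hiS⟩ := not_subset.1 fun h => hsS (mem_powersetCard.2 ⟨h, hsT.2⟩)
  exact prod_eq_zero his (hf i (hsT.1 his) hiS)

theorem Finset.card_filter_ne_zero_le_of_esymm_eq_zero {ι R : Type*} [Fintype ι]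
    [CommSemiring R] [NoZeroDivisors R] [Nontrivial R] [DecidableEq R] (f : ι → R) (m : ℕ)
    (h : ∀ k, m < k → k ≤ Fintype.card ι → ∑ s ∈ powersetCard k univ, ∏ i ∈ s, f i = 0) :
    #{i | f i ≠ 0} ≤ m := by
  set S : Finset ι := {i | f i ≠ 0}
  by_contra! hmS
  have hsum := h #S hmS (card_le_univ S)
  rw [sum_powersetCard_prod_of_subset (subset_univ S) (fun i _ hi => by simpa [S] using hi),
    powersetCard_self, sum_singleton] at hsum
  exact prod_ne_zero_iff.2 (fun i hi => (mem_filter.1 hi).2) hsum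

theorem norm_sum_sq_lt_of_card_filter_ne_zero_le {ι R : Type*} [Fintype ι] [SeminormedRing R]
    [DecidableEq R] {f : ι → R} (hf : ∀ i, ‖f i‖ < 1) {m : ℕ} (hm : 0 < m)
    (hcard : #{i | f i ≠ 0} ≤ m) : ‖∑ i, f i ^ 2‖ < m := by
  set S : Finset ι := {i | f i ≠ 0}
  have hsum : ∑ i ∈ S, f i ^ 2 = ∑ i, f i ^ 2 :=
    sum_filter_of_ne fun i _ hi => left_ne_zero_of_mul (by simpa [sq] using hi)
  rw [← hsum]
  rcases S.eq_empty_or_nonempty with hS | hS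
  · simp [hS, hm]
  calc ‖∑ i ∈ S, f i ^ 2‖ ≤ ∑ i ∈ S, ‖f i‖ ^ 2 :=
        (norm_sum_le _ _).trans (sum_le_sum fun i _ => norm_pow_le' _ two_pos)
    _ < ∑ i ∈ S, 1 :=
        sum_lt_sum_of_nonempty hS fun i _ => pow_lt_one₀ (norm_nonneg _) (hf i) two_ne_zero
    _ ≤ m := by simpa using hcard

theorem t_sq_lt_half_general (n : ℕ) (hn : 3 ≤ n) (t : ℝ)
    (τ : ℝ) (μ : Fin n → ℂ) (hμ : ∀ i, ‖μ i‖ < 1)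
    (hπ : symPoly n μ = fun i : Fin n =>
      if (i : ℕ) = 0 then -6 * Complex.I * τ * t
      else if (i : ℕ) = 1 then 3 * (t : ℂ) ^ 2
      else if (i : ℕ) = 2 then -2 * Complex.I * τ * (t : ℂ) ^ 3
      else 0) :
    t ^ 2 < 1 / 2 := by
  classical
  have hcoeff (k : ℕ) (hk : k < n) := congrFun hπ ⟨k, hk⟩
  simp only [symPoly] at hcoeff
  have hcard : #{i | μ i ≠ 0} ≤ 3 := by
    refine card_filter_ne_zero_le_of_esymm_eq_zero μ 3 fun k hk hkn => ?_
    obtain ⟨j, rfl⟩ : ∃ j, k = j + 1 := ⟨k - 1, by omega⟩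
    simpa [show j ≠ 0 ∧ j ≠ 1 ∧ j ≠ 2 by omega] using hcoeff j (by simpa using hkn)
  have hp₂ : ∑ i, μ i ^ 2 = -(((36 * τ ^ 2 + 6) * t ^ 2 : ℝ) : ℂ) := by
    rw [sum_sq_eq_esymm, hcoeff 0 (by omega), hcoeff 1 (by omega)]
    push_cast
    linear_combination (36 * τ ^ 2 * t ^ 2 : ℂ) * Complex.I_sq
  have hlt := norm_sum_sq_lt_of_card_filter_ne_zero_le hμ three_pos hcard
  rw [hp₂, norm_neg, Complex.norm_real, Real.norm_of_nonneg (by positivity), Nat.cast_ofNat] at hlt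
  nlinarith [sq_nonneg (τ * t)]

/-- If `μ ∈ 𝔻ⁿ` satisfies `πₙ(μ) = (-6iτt, 3t², -2iτt³, 0, …, 0)` with `t ∈ (0,1)` and
`τ ∈ ℝ`, then `t² < 1/2`. -/
theorem t_sq_lt_half (n : ℕ) (hn : 3 ≤ n) (t : ℝ) (ht : t ∈ Set.Ioo (0 : ℝ) 1)
    (τ : ℝ) (μ : Fin n → ℂ) (hμ : ∀ i, ‖μ i‖ < 1)
    (hπ : symPoly n μ = fun i : Fin n =>
      if (i : ℕ) = 0 then -6 * Complex.I * τ * t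
      else if (i : ℕ) = 1 then 3 * (t : ℂ) ^ 2
      else if (i : ℕ) = 2 then -2 * Complex.I * τ * (t : ℂ) ^ 3
      else 0) :
    t ^ 2 < 1 / 2 :=
  t_sq_lt_half_general n hn t τ μ hμ hπ
end

section
/- Any weakly linearly convex balanced domain in ℂⁿ is convex. -/
/-- Any weakly linearly convex balanced domain in `ℂⁿ` is convex. -/
theorem weakly_linearly_convex_balanced_is_convex (n : ℕ) (D : Set (Fin n → ℂ))
    (hopen : IsOpen D) (hconn : IsConnected D)
    (hbal : ∀ z ∈ D, ∀ lam : ℂ, ‖lam‖ ≤ 1 → lam • z ∈ D)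
    (hwlc : ∀ a ∈ frontier D, ∃ v : Fin n → ℂ, v ≠ 0 ∧
      ∀ z ∈ D, ∑ i, (z i - a i) * v i ≠ 0) :
    Convex ℝ D := by
  classical
  obtain ⟨z0, hz0⟩ := hconn.nonempty
  have h0 : (0 : Fin n → ℂ) ∈ D := by
    have := hbal z0 hz0 0 (by norm_num)
    simpa using this
  have hwlc' : ∀ a : frontier D, ∃ v : Fin n → ℂ,
      ∀ z ∈ D, ∑ i, (z i - (a : Fin n → ℂ) i) * v i ≠ 0 := by
    intro a
    obtain ⟨v, _, hv⟩ := hwlc a a.2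
    exact ⟨v, hv⟩
  choose v hv using hwlc'
  -- rewrite the nonvanishing condition
  have hkey : ∀ (a : frontier D) (z : Fin n → ℂ), z ∈ D →
      (∑ i, z i * v a i) - (∑ i, (a : Fin n → ℂ) i * v a i) ≠ 0 := by
    intro a z hz
    have := hv a z hz
    simpa [sub_mul, Finset.sum_sub_distrib] using this
  have hA : ∀ a : frontier D, (∑ i, (a : Fin n → ℂ) i * v a i) ≠ 0 := by
    intro a
    have := hkey a 0 h0
    simpa using this
  set C : Set (Fin n → ℂ) :=
    ⋂ a : frontier D, {z | ‖∑ i, z i * v a i‖ < ‖∑ i, (a : Fin n → ℂ) i * v a i‖} with hC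
  -- C is convex
  have hCconv : Convex ℝ C := by
    refine convex_iInter fun a => ?_
    intro x hx y hy s t hs ht hst
    simp only [Set.mem_setOf_eq] at hx hy ⊢
    have hsum : (∑ i, (s • x + t • y) i * v a i)
        = (s : ℂ) * (∑ i, x i * v a i) + (t : ℂ) * (∑ i, y i * v a i) := by
      simp only [Pi.add_apply, Pi.smul_apply, Finset.mul_sum]
      rw [← Finset.sum_add_distrib]
      congr 1; ext i
      simp [Complex.real_smul]
      ring
    calc ‖∑ i, (s • x + t • y) i * v a i‖
        ≤ ‖(s : ℂ) * (∑ i, x i * v a i)‖ + ‖(t : ℂ) * (∑ i, y i * v a i)‖ := by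
          rw [hsum]; exact norm_add_le _ _
      _ = s * ‖∑ i, x i * v a i‖ + t * ‖∑ i, y i * v a i‖ := by
          simp [norm_mul, Complex.norm_real, abs_of_nonneg hs, abs_of_nonneg ht]
      _ < s * ‖∑ i, (a : Fin n → ℂ) i * v a i‖ + t * ‖∑ i, (a : Fin n → ℂ) i * v a i‖ := by
          rcases eq_or_lt_of_le hs with hs0 | hs0
          · rcases eq_or_lt_of_le ht with ht0 | ht0
            · exfalso; rw [← hs0, ← ht0] at hst; norm_num at hst
            · rw [← hs0]; simpa using (mul_lt_mul_of_pos_left hy ht0)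
          · rcases eq_or_lt_of_le ht with ht0 | ht0
            · rw [← ht0]; simpa using (mul_lt_mul_of_pos_left hx hs0)
            · exact add_lt_add (mul_lt_mul_of_pos_left hx hs0)
                (mul_lt_mul_of_pos_left hy ht0)
      _ = ‖∑ i, (a : Fin n → ℂ) i * v a i‖ := by rw [← add_mul, hst, one_mul]
  -- D ⊆ C
  have hDC : D ⊆ C := by
    intro z hz
    refine Set.mem_iInter.2 fun a => ?_
    simp only [Set.mem_setOf_eq]
    set S := ∑ i, z i * v a i with hS
    set A := ∑ i, (a : Fin n → ℂ) i * v a i with hA'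
    by_contra hle
    push_neg at hle
    have hSne : S ≠ 0 := by
      intro h
      have : ‖A‖ ≤ 0 := by simpa [h] using hle
      exact hA a (norm_le_zero_iff.1 this)
    set lam : ℂ := A / S with hlam
    have hlamnorm : ‖lam‖ ≤ 1 := by
      rw [hlam, norm_div]
      exact div_le_one_of_le₀ hle (norm_nonneg _)
    have hmem : lam • z ∈ D := hbal z hz lam hlamnorm
    have := hkey a (lam • z) hmem
    apply this
    have hsum : (∑ i, (lam • z) i * v a i) = lam * S := by
      rw [hS, Finset.mul_sum]
      congr 1; ext i
      simp [Pi.smul_apply, smul_eq_mul]; ring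
    rw [hsum, hlam, div_mul_cancel₀ _ hSne, sub_self]
  -- 0 ∈ C
  have h0C : (0 : Fin n → ℂ) ∈ C := by
    refine Set.mem_iInter.2 fun a => ?_
    simp only [Set.mem_setOf_eq]
    simpa using norm_pos_iff.2 (hA a)
  -- C is disjoint from the frontier
  have hCfr : ∀ x ∈ C, x ∉ frontier D := by
    intro x hx hfr
    have := Set.mem_iInter.1 hx ⟨x, hfr⟩
    simp only [Set.mem_setOf_eq] at this
    exact lt_irrefl _ this
  -- C ⊆ D by connectedness
  have hCD : C ⊆ D := by
    have hsub : C ⊆ D ∪ (closure D)ᶜ := by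
      intro x hx
      by_cases hxc : x ∈ closure D
      · left
        have : x ∈ interior D := by
          by_contra hxi
          exact hCfr x hx ⟨hxc, hxi⟩
        rwa [hopen.interior_eq] at this
      · right; exact hxc
    have hdisj : Disjoint D (closure D)ᶜ :=
      Set.disjoint_compl_right_iff_subset.2 subset_closure
    have := IsPreconnected.subset_left_of_subset_union hopen
      (isClosed_closure.isOpen_compl) hdisj hsub ⟨0, h0C, h0⟩
      hCconv.isPreconnected
    exact this
  have : D = C := le_antisymm hDC hCD
  rw [this]
  exact hCconv
end

section
/- If D ⊂ ℂⁿ is a balanced domain and a connected component of D** (where E* = {w : ⟨z,w⟩ ≠ 1 ∀ z ∈ E}), then D = D** and in particular D is convex. -/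
/-- For a balanced set `E`, membership in its dual is equivalent to a strict norm bound. -/
lemma dual_balanced_char (n : ℕ) (E : Set (Fin n → ℂ))
    (hbalE : ∀ z ∈ E, ∀ lam : ℂ, ‖lam‖ ≤ 1 → lam • z ∈ E) (w : Fin n → ℂ) :
    (∀ z ∈ E, ∑ i, z i * w i ≠ 1) ↔ ∀ z ∈ E, ‖∑ i, z i * w i‖ < 1 := by
  constructor
  · intro h z hz
    by_contra hge
    push_neg at hge
    set c := ∑ i, z i * w i with hc
    have hc0 : c ≠ 0 := by
      intro h0; rw [h0] at hge; simp at hge; linarith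
    have hlam : ‖c⁻¹‖ ≤ 1 := by
      rw [norm_inv]
      exact inv_le_one_of_one_le₀ hge
    have hmem := hbalE z hz _ hlam
    apply h _ hmem
    have : ∑ i, (c⁻¹ • z) i * w i = c⁻¹ * c := by
      rw [hc, Finset.mul_sum]
      exact Finset.sum_congr rfl fun i _ => by simp [mul_assoc]
    rw [this, inv_mul_cancel₀ hc0]
  · intro h z hz heq
    have := h z hz
    rw [heq] at this
    simp at this

/-- If a balanced domain `D` is a connected component of `D**`, then `D = D**`, and in
particular `D` is convex. -/
theorem balanced_component_of_double_dual (n : ℕ) (D : Set (Fin n → ℂ))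
    (hopen : IsOpen D) (hconn : IsConnected D) (h0 : 0 ∈ D)
    (hbal : ∀ z ∈ D, ∀ lam : ℂ, ‖lam‖ ≤ 1 → lam • z ∈ D)
    (dual : Set (Fin n → ℂ) → Set (Fin n → ℂ))
    (hdual : ∀ E, dual E = {w | ∀ z ∈ E, ∑ i, z i * w i ≠ 1})
    (hcomp : ∃ x ∈ dual (dual D), D = connectedComponentIn (dual (dual D)) x) :
    D = dual (dual D) ∧ Convex ℝ D := by
  obtain ⟨x, hx, hD⟩ := hcomp
  -- dual D is balanced
  have hbal' : ∀ v ∈ dual D, ∀ lam : ℂ, ‖lam‖ ≤ 1 → lam • v ∈ dual D := by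
    intro v hv lam hlam
    rw [hdual] at hv ⊢
    have hv' := (dual_balanced_char n D hbal v).mp hv
    apply (dual_balanced_char n D hbal (lam • v)).mpr
    intro z hz
    have e : ∑ i, z i * (lam • v) i = lam * ∑ i, z i * v i := by
      rw [Finset.mul_sum]
      exact Finset.sum_congr rfl fun i _ => by simp [smul_eq_mul]; ring
    rw [e, norm_mul]
    have h1 := hv' z hz
    have h2 := norm_nonneg (∑ i, z i * v i)
    nlinarith [norm_nonneg lam]
  -- characterization of the double dual
  have hchar : ∀ w, w ∈ dual (dual D) ↔ ∀ v ∈ dual D, ‖∑ i, v i * w i‖ < 1 := by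
    intro w
    rw [hdual]
    exact dual_balanced_char n (dual D) hbal' w
  -- the double dual is convex
  have hconv : Convex ℝ (dual (dual D)) := by
    intro w₁ h₁ w₂ h₂ a b ha hb hab
    rw [hchar] at h₁ h₂ ⊢
    intro v hv
    have e : ∑ i, v i * (a • w₁ + b • w₂) i
        = a • (∑ i, v i * w₁ i) + b • (∑ i, v i * w₂ i) := by
      rw [Finset.smul_sum, Finset.smul_sum, ← Finset.sum_add_distrib]
      exact Finset.sum_congr rfl fun i _ => by
        simp only [Pi.add_apply, Pi.smul_apply, smul_eq_mul, Complex.real_smul]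
        ring
    rw [e]
    have hx1 := h₁ v hv
    have hx2 := h₂ v hv
    set X := ∑ i, v i * w₁ i
    set Y := ∑ i, v i * w₂ i
    have hm : max ‖X‖ ‖Y‖ < 1 := max_lt hx1 hx2
    calc ‖a • X + b • Y‖ ≤ ‖a • X‖ + ‖b • Y‖ := norm_add_le _ _
      _ = a * ‖X‖ + b * ‖Y‖ := by
          rw [norm_smul, norm_smul, Real.norm_of_nonneg ha, Real.norm_of_nonneg hb]
      _ ≤ a * max ‖X‖ ‖Y‖ + b * max ‖X‖ ‖Y‖ := by
          gcongr
          exacts [le_max_left _ _, le_max_right _ _]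
      _ = max ‖X‖ ‖Y‖ := by rw [← add_mul, hab, one_mul]
      _ < 1 := hm
  have hpre : IsPreconnected (dual (dual D)) := hconv.isPreconnected
  have heq : D = dual (dual D) := by
    rw [hpre.connectedComponentIn hx] at hD; exact hD
  exact ⟨heq, by rw [heq]; exact hconv⟩
end

section
/- The symmetrized bidisc G_2 is starlike with respect to the origin: if (s,p) ∈ G_2 and t ∈ [0,1], then (ts, tp) ∈ G_2. -/
open Metric

/-!
Scaling `(s, p) = (a + b, a b)` by `t` replaces `(z - a)(z - b)` by
`z² - t s z + t p = (1 - t) z² + t (z - a)(z - b)`, whose roots are the new pair. For `|z| ≥ 1`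
both factors of `(z - a)(z - b) / z² = (1 - a/z)(1 - b/z)` lie in the right half-plane, so the
product avoids `(-∞, 0]`; as the slit plane is star-shaped about `1`, the convex combination
`(1 - t) + t (1 - a/z)(1 - b/z)` does not vanish, and every root lies in the unit disc.
-/

theorem exists_add_eq_and_mul_eq {K : Type*} [Field K] [IsAlgClosed K] (s p : K) :
    ∃ α β : K, α + β = s ∧ α * β = p := by
  open Polynomial in
  obtain ⟨α, hα⟩ := IsAlgClosed.exists_root (C 1 * X ^ 2 + C (-s) * X + C p)
    (by rw [degree_quadratic one_ne_zero]; decide)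
  refine ⟨α, s - α, by ring, ?_⟩
  simp only [IsRoot, eval_add, eval_mul, eval_C, eval_pow, eval_X] at hα
  linear_combination -hα

namespace Complex

theorem re_one_sub_pos {c : ℂ} (hc : ‖c‖ < 1) : 0 < (1 - c).re := by
  have := re_le_norm c
  simp only [sub_re, one_re]
  linarith

theorem mul_mem_slitPlane_of_re_pos {z w : ℂ} (hz : 0 < z.re) (hw : 0 < w.re) :
    z * w ∈ slitPlane := by
  rw [mem_slitPlane_iff, mul_re, mul_im]
  by_contra! ⟨hre, him⟩
  nlinarith [mul_pos (mul_pos hz hz) hw, mul_nonneg (sq_nonneg z.im) hw.le,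
    mul_nonpos_of_nonneg_of_nonpos hz.le hre, congrArg (z.im * ·) him]

theorem one_sub_mul_add_mul_ne_zero {w : ℂ} (hw : w ∈ slitPlane) {t : ℝ} (ht₀ : 0 ≤ t)
    (ht₁ : t ≤ 1) : (1 - t : ℂ) + t * w ≠ 0 := by
  have hmem := starConvex_one_slitPlane hw (sub_nonneg.2 ht₁) ht₀ (sub_add_cancel 1 t)
  simp only [real_smul, ofReal_sub, ofReal_one, mul_one] at hmem
  exact slitPlane_ne_zero hmem

theorem norm_lt_one_of_one_sub_mul_sq_add_mul_eq_zero {a b z : ℂ} (ha : ‖a‖ < 1) (hb : ‖b‖ < 1)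
    {t : ℝ} (ht₀ : 0 ≤ t) (ht₁ : t ≤ 1) (hz : (1 - t) * z ^ 2 + t * ((z - a) * (z - b)) = 0) :
    ‖z‖ < 1 := by
  by_contra! hz₁
  have hz₀ : z ≠ 0 := norm_pos_iff.1 (one_pos.trans_le hz₁)
  have hdiv : ∀ {c : ℂ}, ‖c‖ < 1 → ‖c / z‖ < 1 := fun hc ↦ by
    rw [norm_div]
    exact (div_le_self (norm_nonneg _) hz₁).trans_lt hc
  have hw := mul_mem_slitPlane_of_re_pos (re_one_sub_pos (hdiv ha)) (re_one_sub_pos (hdiv hb))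
  apply one_sub_mul_add_mul_ne_zero hw ht₀ ht₁
  field_simp
  linear_combination hz

end Complex

/-- The symmetrized bidisc is starlike with respect to the origin. -/
theorem symBidisc_starlike (s p : ℂ) (h : (s, p) ∈ symBidisc)
    (t : ℝ) (ht : t ∈ Set.Icc (0 : ℝ) 1) :
    ((t : ℂ) * s, (t : ℂ) * p) ∈ symBidisc := by
  obtain ⟨a, b, ha, hb, hab⟩ := h
  obtain ⟨rfl, rfl⟩ := Prod.mk.inj hab
  rw [mem_ball_zero_iff] at ha hb
  obtain ⟨α, β, hsum, hprod⟩ := exists_add_eq_and_mul_eq (t * (a + b)) (t * (a * b))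
  refine ⟨α, β, ?_, ?_, by rw [hsum, hprod]⟩ <;> rw [mem_ball_zero_iff] <;>
    refine Complex.norm_lt_one_of_one_sub_mul_sq_add_mul_eq_zero ha hb ht.1 ht.2 ?_
  · linear_combination α * hsum - hprod
  · linear_combination β * hsum - hprod
end

section
/- A degenerate linearly convex domain D ⊂ ℂⁿ containing a complex line is, after a complex affine change of coordinates, of the form ℂ × D' for some domain D' ⊂ ℂ^{n-1}; precisely, if D is linearly convex and contains the line ℂ × {0} (n ≥ 2), then D = ℂ × G for some open set G ⊂ ℂ^{n-1}. -/
/-!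
A hyperplane `{w | (w.1 - z.1) v.1 + ∑ i, (w.2 i - z.2 i) v.2 i = 0}` with `v.1 ≠ 0` meets
every line `𝕜 × {y}`, so a hyperplane missing `𝕜 × {0}` has `v.1 = 0`, i.e. it is a product
`𝕜 × H`. Hence a point `(c, p.2)` outside `D` would lie on such a hyperplane, which then also
contains `p`; so membership in `D` does not depend on the first coordinate.
-/

variable {𝕜 ι : Type*} [Field 𝕜] [Fintype ι]

lemma fst_eq_zero_of_forall_ne_zero (z v : 𝕜 × (ι → 𝕜))
    (h : ∀ c : 𝕜, (c - z.1) * v.1 + ∑ i, ((0 : ι → 𝕜) i - z.2 i) * v.2 i ≠ 0) : v.1 = 0 := by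
  by_contra hv
  apply h (z.1 - (∑ i, ((0 : ι → 𝕜) i - z.2 i) * v.2 i) / v.1)
  field_simp
  ring

lemma mk_fst_mem_of_mem {D : Set (𝕜 × (ι → 𝕜))}
    (hlc : ∀ z ∉ D, ∃ v : 𝕜 × (ι → 𝕜),
      ∀ w ∈ D, (w.1 - z.1) * v.1 + ∑ i, (w.2 i - z.2 i) * v.2 i ≠ 0)
    (hline : ∀ c : 𝕜, (c, (0 : ι → 𝕜)) ∈ D) {p : 𝕜 × (ι → 𝕜)} (hp : p ∈ D) (c : 𝕜) :
    (c, p.2) ∈ D := by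
  by_contra hc
  obtain ⟨v, hsep⟩ := hlc (c, p.2) hc
  have hv : v.1 = 0 := fst_eq_zero_of_forall_ne_zero (c, p.2) v fun c' ↦ hsep _ (hline c')
  exact hsep p hp (by simp [hv])

lemma Set.eq_univ_prod_preimage_mk {α β : Type*} {D : Set (α × β)} (a : α)
    (hD : ∀ p ∈ D, ∀ c : α, (c, p.2) ∈ D) : D = Set.univ ×ˢ (Prod.mk a ⁻¹' D) := by
  ext ⟨c, y⟩
  exact ⟨fun h ↦ ⟨trivial, hD _ h a⟩, fun h ↦ hD _ h.2 c⟩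

theorem degenerate_linearly_convex_is_product_general (m : ℕ)
    (D : Set (ℂ × (Fin m → ℂ))) (hopen : IsOpen D)
    (hlc : ∀ z ∉ D, ∃ v : ℂ × (Fin m → ℂ), v ≠ 0 ∧
      ∀ w ∈ D, (w.1 - z.1) * v.1 + ∑ i, (w.2 i - z.2 i) * v.2 i ≠ 0)
    (hline : ∀ c : ℂ, (c, (0 : Fin m → ℂ)) ∈ D) :
    ∃ G : Set (Fin m → ℂ), IsOpen G ∧ D = Set.univ ×ˢ G := by
  have hlc' : ∀ z ∉ D, ∃ v : ℂ × (Fin m → ℂ),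
      ∀ w ∈ D, (w.1 - z.1) * v.1 + ∑ i, (w.2 i - z.2 i) * v.2 i ≠ 0 :=
    fun z hz ↦ (hlc z hz).imp fun _ ↦ And.right
  exact ⟨_, hopen.preimage (Continuous.prodMk_right 0),
    Set.eq_univ_prod_preimage_mk 0 fun p hp c ↦ mk_fst_mem_of_mem hlc' hline hp c⟩

/-- A linearly convex domain in `ℂ × ℂᵐ` containing the line `ℂ × {0}` is of the form
`ℂ × G` for some open set `G`. -/
theorem degenerate_linearly_convex_is_product (m : ℕ)
    (D : Set (ℂ × (Fin m → ℂ))) (hopen : IsOpen D) (hconn : IsConnected D)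
    (hlc : ∀ z ∉ D, ∃ v : ℂ × (Fin m → ℂ), v ≠ 0 ∧
      ∀ w ∈ D, (w.1 - z.1) * v.1 + ∑ i, (w.2 i - z.2 i) * v.2 i ≠ 0)
    (hline : ∀ c : ℂ, (c, (0 : Fin m → ℂ)) ∈ D) :
    ∃ G : Set (Fin m → ℂ), IsOpen G ∧ D = Set.univ ×ˢ G :=
  degenerate_linearly_convex_is_product_general m D hopen hlc hline
end
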